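/- arXiv:2109.02256 — 5 statements merged into one kernel-verified Lean document; each statement's English description precedes it below -/
import Mathlib

section
/- Let x₁, …, x_N be as in the periodic setting, solving the Euler–Lagrange system with zero potential gradient, and assume in addition that r ↦ G'(r) r² is nondecreasing on (0, ∞). If U : [0, ∞) → ℝ is twice continuously differentiable and convex, then the map t ↦ Σ_{i=1}^{N} U(Rᵢ(t)) (xᵢ(t) − x_{i−1}(t)) is convex on [0, T]. -/
/-!
The energy is `Σᵢ f(dᵢ)` over the gaps `dᵢ = xᵢ − x_{i−1}`, with `f(d) = d U(δ/d)`, and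
`f'(d) = −P(δ/d)` for the pressure `P(r) = r U'(r) − U(r)`, which is nondecreasing because `U`
is convex. Its second time derivative is `Σᵢ f''(dᵢ) ḋᵢ² − Σᵢ P(Rᵢ) (ẍᵢ − ẍ_{i−1})`. The first
sum is nonnegative since `f'' ≥ 0`; periodic summation by parts turns the second into
`Σᵢ (P(R_{i+1}) − P(Rᵢ)) ẍᵢ`, and by the Euler–Lagrange equation `ẍᵢ` has the sign of
`B(R_{i+1}) − B(Rᵢ)` with `B(r) = G'(r) r²`. As `P` and `B` are both nondecreasing, every term
is nonnegative.
-/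

open Set Finset Function

/-- Discrete density `Rᵢ(t) = δ/(xᵢ(t) − x_{i−1}(t))`, `δ = 1/N`, periodic indexing by `ℤ`. -/
noncomputable def Rd (N : ℕ) (x : ℤ → ℝ → ℝ) (i : ℤ) (t : ℝ) : ℝ :=
  ((1 : ℝ) / N) / (x i t - x (i - 1) t)

theorem Function.Periodic.sum_Icc_comp_sub_one {M : Type*} [AddCommMonoid M] {f : ℤ → M} {n : ℤ}
    (hf : Periodic f n) : ∑ i ∈ Icc 1 n, f (i - 1) = ∑ i ∈ Icc 1 n, f i := by
  -- the cyclic shift `i ↦ i - 1` of `Icc 1 n`, sending `1` to `n` (where `f 0 = f n`)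
  refine sum_nbij' (fun i => if i = 1 then n else i - 1) (fun j => if j = n then 1 else j + 1)
    ?_ ?_ ?_ ?_ ?_ <;> intro i hi <;> rw [Finset.mem_Icc] at hi
  · rw [Finset.mem_Icc]; split_ifs <;> omega
  · rw [Finset.mem_Icc]; split_ifs <;> omega
  · split_ifs <;> omega
  · split_ifs <;> omega
  · split_ifs with h
    · simpa [h] using (hf 0).symm
    · rfl

theorem Function.Periodic.sum_Icc_mul_sub {R : Type*} [CommRing R] {p q : ℤ → R} {n : ℤ}
    (hp : Periodic p n) (hq : Periodic q n) :
    ∑ i ∈ Icc 1 n, p i * (q i - q (i - 1)) = ∑ i ∈ Icc 1 n, (p i - p (i + 1)) * q i := by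
  have hshift := ((hp.add_const 1).mul hq).sum_Icc_comp_sub_one
  simp only [Pi.mul_apply, sub_add_cancel] at hshift
  simp only [mul_sub, sub_mul, sum_sub_distrib, hshift]

theorem MonovaryOn.sub_mul_nonneg_of_mul_eq {P B : ℝ → ℝ} {S : Set ℝ} (h : MonovaryOn P B S)
    {r s a c n : ℝ} (hr : r ∈ S) (hs : s ∈ S) (hc : 0 < c) (hn : 0 ≤ n)
    (ha : c * a = n * (B s - B r)) : 0 ≤ (P s - P r) * a := by
  refine (mul_nonneg_iff_of_pos_right hc).1 ?_
  linear_combination mul_nonneg hn (h.sub_mul_sub_nonneg hr hs) - (P s - P r) * ha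

theorem ConvexOn.deriv_deriv_nonneg {U : ℝ → ℝ} {S : Set ℝ} {r : ℝ} (hU : ConvexOn ℝ S U)
    (hS : IsOpen S) (hd : ∀ r ∈ S, DifferentiableAt ℝ U r) (hr : r ∈ S) :
    0 ≤ deriv (deriv U) r := by
  rw [← derivWithin_of_isOpen hS hr]
  exact (hU.monotoneOn_deriv hd).derivWithin_nonneg

noncomputable def pressure (U : ℝ → ℝ) (r : ℝ) : ℝ := r * deriv U r - U r

section Pressure

variable {U : ℝ → ℝ}

theorem ConvexOn.monotoneOn_pressure (hU : ConvexOn ℝ (Ioi 0) U)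
    (hd : ∀ r ∈ Ioi (0 : ℝ), DifferentiableAt ℝ U r) : MonotoneOn (pressure U) (Ioi 0) := by
  intro r hr s hs hrs
  rcases hrs.eq_or_lt with rfl | hlt
  · rfl
  have hslope := hU.slope_le_deriv hr hs hlt (hd s hs)
  rw [slope_def_field, div_le_iff₀ (sub_pos.2 hlt)] at hslope
  have hderiv := mul_le_mul_of_nonneg_left (hU.monotoneOn_deriv hd hr hs hrs) (le_of_lt hr)
  simp only [pressure]
  linarith

theorem hasDerivAt_pressure {r : ℝ} (hU : DifferentiableAt ℝ U r)
    (hU' : DifferentiableAt ℝ (deriv U) r) :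
    HasDerivAt (pressure U) (r * deriv (deriv U) r) r := by
  refine (((hasDerivAt_id r).mul hU'.hasDerivAt).sub hU.hasDerivAt).congr_deriv ?_
  simp only [id]
  ring

variable {g g' : ℝ → ℝ} {δ g'' t : ℝ}

theorem hasDerivAt_comp_div_mul (hg : HasDerivAt g (g' t) t) (hgt : g t ≠ 0)
    (hU : DifferentiableAt ℝ U (δ / g t)) :
    HasDerivAt (fun s => U (δ / g s) * g s) (-pressure U (δ / g t) * g' t) t := by
  refine ((hU.hasDerivAt.comp t ((hasDerivAt_const t δ).div hg hgt)).mul hg).congr_deriv ?_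
  simp only [pressure, comp_apply, Pi.div_apply]
  field_simp
  ring

theorem hasDerivAt_pressure_comp_div_mul (hg : HasDerivAt g (g' t) t) (hg' : HasDerivAt g' g'' t)
    (hgt : g t ≠ 0) (hU : DifferentiableAt ℝ U (δ / g t))
    (hU' : DifferentiableAt ℝ (deriv U) (δ / g t)) :
    HasDerivAt (fun s => -pressure U (δ / g s) * g' s)
      ((δ / g t) ^ 2 * deriv (deriv U) (δ / g t) * g' t ^ 2 / g t
        - pressure U (δ / g t) * g'') t := by
  refine (((hasDerivAt_pressure hU hU').comp t
    ((hasDerivAt_const t δ).div hg hgt)).neg.mul hg').congr_deriv ?_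
  simp only [comp_apply, Pi.div_apply, Pi.neg_apply]
  field_simp
  ring

end Pressure

section Particles

variable {N : ℕ} {x : ℤ → ℝ → ℝ} {U : ℝ → ℝ} {t : ℝ}

theorem Rd_pos (hN : 0 < N) {i : ℤ} (hgap : 0 < x i t - x (i - 1) t) : 0 < Rd N x i t :=
  div_pos (by positivity) hgap

theorem periodic_Rd (hper : ∀ i t, x (i + N) t = x i t + 1) (t : ℝ) :
    Periodic (fun i => Rd N x i t) N := by
  intro i
  simp only [Rd, show i + N - 1 = i - 1 + N by ring, hper, add_sub_add_right_eq_sub]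

theorem periodic_deriv_deriv (hper : ∀ i t, x (i + N) t = x i t + 1) (t : ℝ) :
    Periodic (fun i => deriv (deriv (x i)) t) N := by
  intro i
  simp only [show x (i + N) = fun s => x i s + 1 from funext (hper i), deriv_add_const']

noncomputable def energy (N : ℕ) (U : ℝ → ℝ) (x : ℤ → ℝ → ℝ) (t : ℝ) : ℝ :=
  ∑ i ∈ Icc (1 : ℤ) N, U (Rd N x i t) * (x i t - x (i - 1) t)

noncomputable def energyDeriv (N : ℕ) (U : ℝ → ℝ) (x : ℤ → ℝ → ℝ) (t : ℝ) : ℝ :=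
  ∑ i ∈ Icc (1 : ℤ) N, -pressure U (Rd N x i t) * (deriv (x i) t - deriv (x (i - 1)) t)

noncomputable def energyDeriv2 (N : ℕ) (U : ℝ → ℝ) (x : ℤ → ℝ → ℝ) (t : ℝ) : ℝ :=
  ∑ i ∈ Icc (1 : ℤ) N,
    (Rd N x i t ^ 2 * deriv (deriv U) (Rd N x i t) * (deriv (x i) t - deriv (x (i - 1)) t) ^ 2
        / (x i t - x (i - 1) t)
      - pressure U (Rd N x i t) * (deriv (deriv (x i)) t - deriv (deriv (x (i - 1))) t))

theorem hasDerivAt_energy (hN : 0 < N) (hx : ∀ i, DifferentiableAt ℝ (x i) t)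
    (hgap : ∀ i, 0 < x i t - x (i - 1) t) (hU : ∀ r ∈ Ioi (0 : ℝ), DifferentiableAt ℝ U r) :
    HasDerivAt (energy N U x) (energyDeriv N U x t) t :=
  HasDerivAt.fun_sum fun i _ => hasDerivAt_comp_div_mul
    (g' := fun s => deriv (x i) s - deriv (x (i - 1)) s)
    ((hx i).hasDerivAt.fun_sub (hx (i - 1)).hasDerivAt) (hgap i).ne' (hU _ (Rd_pos hN (hgap i)))

theorem hasDerivAt_energyDeriv (hN : 0 < N) (hx : ∀ i, DifferentiableAt ℝ (x i) t)
    (hx' : ∀ i, DifferentiableAt ℝ (deriv (x i)) t) (hgap : ∀ i, 0 < x i t - x (i - 1) t)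
    (hU : ∀ r ∈ Ioi (0 : ℝ), DifferentiableAt ℝ U r)
    (hU' : ∀ r ∈ Ioi (0 : ℝ), DifferentiableAt ℝ (deriv U) r) :
    HasDerivAt (energyDeriv N U x) (energyDeriv2 N U x t) t :=
  HasDerivAt.fun_sum fun i _ => hasDerivAt_pressure_comp_div_mul
    (g' := fun s => deriv (x i) s - deriv (x (i - 1)) s)
    ((hx i).hasDerivAt.fun_sub (hx (i - 1)).hasDerivAt)
    ((hx' i).hasDerivAt.fun_sub (hx' (i - 1)).hasDerivAt) (hgap i).ne'
    (hU _ (Rd_pos hN (hgap i))) (hU' _ (Rd_pos hN (hgap i)))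

theorem energyDeriv2_nonneg {L B : ℝ → ℝ} (hN : 0 < N) (hper : ∀ i t, x (i + N) t = x i t + 1)
    (hgap : ∀ i, 0 < x i t - x (i - 1) t) (hL'' : ∀ u, 0 < deriv (deriv L) u)
    (hmono : MonovaryOn (pressure U) B (Ioi 0)) (hU'' : ∀ r ∈ Ioi (0 : ℝ), 0 ≤ deriv (deriv U) r)
    (hEL : ∀ i, deriv (deriv L) (deriv (x i) t) * deriv (deriv (x i)) t =
      N * (B (Rd N x (i + 1) t) - B (Rd N x i t))) :
    0 ≤ energyDeriv2 N U x t := by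
  have hp : Periodic (fun i => pressure U (Rd N x i t)) N := fun i =>
    congrArg (pressure U) (periodic_Rd hper t i)
  rw [energyDeriv2, sum_sub_distrib, hp.sum_Icc_mul_sub (periodic_deriv_deriv hper t), sub_nonneg]
  refine (sum_nonpos fun i _ => ?_).trans (sum_nonneg fun i _ => ?_)
  · have := hmono.sub_mul_nonneg_of_mul_eq (Rd_pos hN (hgap i)) (Rd_pos hN (hgap (i + 1)))
      (hL'' _) (Nat.cast_nonneg N) (hEL i)
    linarith
  · have := hU'' _ (Rd_pos hN (hgap i))
    have := hgap i
    positivity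

end Particles

theorem stmt_0_general
    (N : ℕ) (hN : 2 ≤ N) (T : ℝ)
    (x : ℤ → ℝ → ℝ)
    (hper : ∀ i t, x (i + N) t = x i t + 1)
    (hx : ∀ i, ContDiff ℝ 2 (x i))
    (hord : ∀ i, ∀ t ∈ Icc (0:ℝ) T, x i t < x (i + 1) t)
    (L : ℝ → ℝ)
    (hL'' : ∀ u, 0 < deriv (deriv L) u)
    (G : ℝ → ℝ)
    (hB : MonotoneOn (fun r => deriv G r * r ^ 2) (Ioi 0))
    (hEL : ∀ i, ∀ t ∈ Icc (0:ℝ) T,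
      deriv (deriv L) (deriv (x i) t) * deriv (deriv (x i)) t =
        N * (deriv G (Rd N x (i + 1) t) * (Rd N x (i + 1) t) ^ 2
          - deriv G (Rd N x i t) * (Rd N x i t) ^ 2))
    (U : ℝ → ℝ) (hU : ContDiffOn ℝ 2 U (Ici 0))
    (hUconv : ConvexOn ℝ (Ici 0) U) :
    ConvexOn ℝ (Icc (0:ℝ) T)
      (fun t => ∑ i ∈ Finset.Icc (1:ℤ) (N:ℤ), U (Rd N x i t) * (x i t - x (i - 1) t)) := by
  have hN0 : 0 < N := by omega
  have hgap : ∀ t ∈ Icc (0:ℝ) T, ∀ i, 0 < x i t - x (i - 1) t := fun t ht i =>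
    sub_pos.2 (by simpa using hord (i - 1) t ht)
  have hU2 : ∀ r ∈ Ioi (0:ℝ), ContDiffAt ℝ 2 U r := fun r hr =>
    hU.contDiffAt (Ici_mem_nhds hr)
  have hUd : ∀ r ∈ Ioi (0:ℝ), DifferentiableAt ℝ U r := fun r hr =>
    (hU2 r hr).differentiableAt two_ne_zero
  have hU'd : ∀ r ∈ Ioi (0:ℝ), DifferentiableAt ℝ (deriv U) r := fun r hr =>
    ((hU2 r hr).derivWithin (m := 1) le_rfl).differentiableAt one_ne_zero
  have hUconv' := hUconv.subset Ioi_subset_Ici_self (convex_Ioi 0)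
  have hE : ∀ t ∈ Icc (0:ℝ) T, HasDerivAt (energy N U x) (energyDeriv N U x t) t := fun t ht =>
    hasDerivAt_energy hN0 (fun i => (hx i).differentiable two_ne_zero t) (hgap t ht) hUd
  have hE' : ∀ t ∈ Icc (0:ℝ) T, HasDerivAt (energyDeriv N U x) (energyDeriv2 N U x t) t :=
    fun t ht => hasDerivAt_energyDeriv hN0 (fun i => (hx i).differentiable two_ne_zero t)
      (fun i => (hx i).differentiable_deriv_two t) (hgap t ht) hUd hU'd
  refine convexOn_of_hasDerivWithinAt2_nonneg (convex_Icc 0 T)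
      (f' := energyDeriv N U x) (f'' := energyDeriv2 N U x)
      (fun t ht => (hE t ht).continuousAt.continuousWithinAt) ?_ ?_ ?_ <;>
    simp only [interior_Icc] <;> intro t ht <;> have ht' := Ioo_subset_Icc_self ht
  · exact (hE t ht').hasDerivWithinAt
  · exact (hE' t ht').hasDerivWithinAt
  · exact energyDeriv2_nonneg hN0 hper (hgap t ht') hL''
      ((hUconv'.monotoneOn_pressure hUd).monovaryOn hB)
      (fun r hr => hUconv'.deriv_deriv_nonneg isOpen_Ioi hUd hr) (fun i => hEL i t ht')

/-- Displacement convexity for the periodic particle system: along solutions of the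
Euler–Lagrange system with zero potential gradient, for any convex `U ∈ C²([0,∞))`
the map `t ↦ Σᵢ U(Rᵢ(t))(xᵢ(t) − x_{i−1}(t))` is convex on `[0,T]`. -/
theorem stmt_0
    (N : ℕ) (hN : 2 ≤ N) (T : ℝ) (hT : 0 < T)
    (x : ℤ → ℝ → ℝ)
    (hper : ∀ i t, x (i + N) t = x i t + 1)
    (hx : ∀ i, ContDiff ℝ 2 (x i))
    (hord : ∀ i, ∀ t ∈ Icc (0:ℝ) T, x i t < x (i + 1) t)
    (L : ℝ → ℝ) (hL : ContDiff ℝ 2 L)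
    (hL'' : ∀ u, 0 < deriv (deriv L) u)
    (G : ℝ → ℝ) (hG : ContDiffOn ℝ 1 G (Ioi 0))
    (hB : MonotoneOn (fun r => deriv G r * r ^ 2) (Ioi 0))
    (hEL : ∀ i, ∀ t ∈ Icc (0:ℝ) T,
      deriv (deriv L) (deriv (x i) t) * deriv (deriv (x i)) t =
        N * (deriv G (Rd N x (i + 1) t) * (Rd N x (i + 1) t) ^ 2
          - deriv G (Rd N x i t) * (Rd N x i t) ^ 2))
    (U : ℝ → ℝ) (hU : ContDiffOn ℝ 2 U (Ici 0))
    (hUconv : ConvexOn ℝ (Ici 0) U) :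
    ConvexOn ℝ (Icc (0:ℝ) T)
      (fun t => ∑ i ∈ Finset.Icc (1:ℤ) (N:ℤ), U (Rd N x i t) * (x i t - x (i - 1) t)) :=
  stmt_0_general N hN T x hper hx hord L hL'' G hB hEL U hU hUconv
end

section
/- Let q ∈ (1, ∞). Assume L : ℝ → ℝ is uniformly convex, i.e. there exists θ > 0 such that L(λu + (1−λ)v) ≤ λL(u) + (1−λ)L(v) − θλ(1−λ)(u−v)² for all u, v ∈ ℝ and λ ∈ [0,1]; G : (0, ∞) → ℝ is such that s ↦ G(δ/s) is convex on (0, ∞); and V : ℝ × [0, T] → ℝ is continuous with x ↦ V(x, t) concave for each t. Let x and y be two admissible curves (of the form x(t) = x⁰ + ∫₀ᵗ v with v ∈ L^q, ordered components, prescribed equal initial point x⁰ and equal terminal point x^T) that both minimize, with finite value, the functional J̃(x) = ∫₀^T (1/N) Σ_{i=1}^{N} [L(ẋᵢ(s)) − V(xᵢ(s), s)] ds + ∫₀^T (1/N) Σ_{i=2}^{N} G(δ/(xᵢ(s) − x_{i−1}(s))) ds over this admissible class. Then x(t) = y(t) for all t ∈ [0, T]. -/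
/-!
Along admissible curves the functional is uniformly convex in the velocity. The midpoint
`z = (x + y) / 2`, with velocity `u = (v + w) / 2`, is again admissible, and uniform convexity of
`L`, convexity of `r ↦ G (δ / r)` and concavity of `V` give pointwise
`F z u + θ / (4N) · Σᵢ (vᵢ - wᵢ)² ≤ (F x v + F y w) / 2` for the integrand `F` of `J̃`.
Since `J̃ x ≤ J̃ z` and `J̃ y ≤ J̃ z`, integrating forces `v = w` a.e., hence `x = y`.
The one technical point is that `J̃ z` is finite: its integrand is bounded above by
`(F x v + F y w) / 2` and below by supporting lines of `L` and of `r ↦ G (δ / r)`.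
-/

open MeasureTheory Set Finset Classical

/-- The extended-real-valued discrete utility functional
`J̃(x,v) = ∫₀ᵀ [(1/N) Σᵢ (L(vᵢ) − V(xᵢ,s)) + (1/N) Σ_{i≥2} G(δ/(xᵢ−x_{i−1}))] ds`,
set to `+∞` unless the integrand is integrable and the gaps are a.e. positive
(the `G`-terms are `+∞` at collisions). -/
noncomputable def Jt (N : ℕ) (T : ℝ) (L G : ℝ → ℝ) (V : ℝ → ℝ → ℝ)
    (x : ℝ → ℕ → ℝ) (v : ℝ → ℕ → ℝ) : EReal :=
  if IntegrableOn (fun s =>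
        (1 / (N:ℝ)) * ∑ i ∈ Finset.Icc 1 N, (L (v s i) - V (x s i) s)
        + (1 / (N:ℝ)) * ∑ i ∈ Finset.Icc 2 N, G (((1:ℝ)/N) / (x s i - x s (i - 1))))
        (Set.Icc 0 T)
      ∧ (∀ᵐ s ∂(volume.restrict (Set.Icc (0:ℝ) T)),
          ∀ i ∈ Finset.Icc 2 N, x s (i - 1) < x s i)
  then ((∫ s in Set.Icc (0:ℝ) T,
        ((1 / (N:ℝ)) * ∑ i ∈ Finset.Icc 1 N, (L (v s i) - V (x s i) s)
        + (1 / (N:ℝ)) * ∑ i ∈ Finset.Icc 2 N, G (((1:ℝ)/N) / (x s i - x s (i - 1))))) : ℝ)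
  else ⊤

/-- The admissible class: curves `xᵢ(t) = xᵢ⁰ + ∫₀ᵗ vᵢ(s) ds` with `v ∈ L^q([0,T];ℝ^N)`,
terminal condition `x(T) = x^T`, and ordered components on `[0,T]`. -/
def Adm (N : ℕ) (T q : ℝ) (x0 xT : ℕ → ℝ)
    (x : ℝ → ℕ → ℝ) (v : ℝ → ℕ → ℝ) : Prop :=
  (∀ i ∈ Finset.Icc 1 N, MemLp (fun s => v s i) (ENNReal.ofReal q)
      (volume.restrict (Set.Icc (0:ℝ) T)))
  ∧ (∀ i ∈ Finset.Icc 1 N, ∀ t ∈ Set.Icc (0:ℝ) T,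
      x t i = x0 i + ∫ s in (0:ℝ)..t, v s i)
  ∧ (∀ i ∈ Finset.Icc 1 N, x T i = xT i)
  ∧ (∀ t ∈ Set.Icc (0:ℝ) T, ∀ i ∈ Finset.Icc 2 N, x t (i - 1) ≤ x t i)

lemma ConvexOn.add_rightDeriv_mul_sub_le {S : Set ℝ} {f : ℝ → ℝ} {a y : ℝ}
    (hf : ConvexOn ℝ S f) (ha : a ∈ interior S) (hy : y ∈ S) :
    f a + derivWithin f (Ioi a) a * (y - a) ≤ f y := by
  rcases lt_trichotomy y a with hya | rfl | hay
  · have h := (hf.slope_le_leftDeriv_of_mem_interior hy ha hya).trans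
      (hf.leftDeriv_le_rightDeriv_of_mem_interior ha)
    rw [slope_def_field, div_le_iff₀ (sub_pos.2 hya)] at h
    linarith
  · simp
  · have h := hf.rightDeriv_le_slope_of_mem_interior ha hy hay
    rw [slope_def_field, le_div_iff₀ (sub_pos.2 hay)] at h
    linarith

lemma ConvexOn.map_add_div_two_le {s : Set ℝ} {f : ℝ → ℝ} {a b : ℝ}
    (hf : ConvexOn ℝ s f) (ha : a ∈ s) (hb : b ∈ s) :
    f ((a + b) / 2) ≤ (f a + f b) / 2 := by
  rw [show (a + b) / 2 = (1 / 2 : ℝ) • a + (1 / 2 : ℝ) • b by simp only [smul_eq_mul]; ring]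
  refine (hf.2 ha hb (by norm_num) (by norm_num) (by norm_num)).trans_eq ?_
  simp only [smul_eq_mul]
  ring

lemma strongConvexOn_univ_of_forall_le {f : ℝ → ℝ} {θ : ℝ}
    (hf : ∀ u v : ℝ, ∀ l : ℝ, 0 ≤ l → l ≤ 1 →
      f (l * u + (1 - l) * v) ≤ l * f u + (1 - l) * f v - θ * l * (1 - l) * (u - v) ^ 2) :
    StrongConvexOn univ (2 * θ) f := by
  refine ⟨convex_univ, fun u _ v _ a b ha hb hab => ?_⟩
  obtain rfl : b = 1 - a := by linarith
  have h := hf u v a ha (by linarith)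
  simp only [smul_eq_mul, Real.norm_eq_abs, sq_abs]
  linarith

lemma StrongConvexOn.map_add_div_two_add_le {f : ℝ → ℝ} {m : ℝ}
    (hf : StrongConvexOn univ m f) (a b : ℝ) :
    f ((a + b) / 2) + m / 8 * (a - b) ^ 2 ≤ (f a + f b) / 2 := by
  rw [← le_sub_iff_add_le,
    show (a + b) / 2 = (1 / 2 : ℝ) • a + (1 / 2 : ℝ) • b by simp only [smul_eq_mul]; ring]
  refine (hf.2 (mem_univ a) (mem_univ b) (by norm_num) (by norm_num) (by norm_num)).trans_eq ?_
  simp only [smul_eq_mul, Real.norm_eq_abs, sq_abs]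
  ring

lemma ContinuousOn.comp_aemeasurable_of_ae_mem {α β γ : Type*} [MeasurableSpace α]
    {μ : Measure α} [TopologicalSpace β] [MeasurableSpace β] [OpensMeasurableSpace β]
    [TopologicalSpace γ] [MeasurableSpace γ] [BorelSpace γ] [Nonempty γ]
    {g : β → γ} {s : Set β} {f : α → β} (hg : ContinuousOn g s) (hs : MeasurableSet s)
    (hf : AEMeasurable f μ) (hfs : ∀ᵐ a ∂μ, f a ∈ s) :
    AEMeasurable (fun a => g (f a)) μ := by
  have hm : Measurable (s.piecewise g fun _ => Classical.arbitrary γ) :=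
    hg.measurable_piecewise continuousOn_const hs
  refine (hm.comp_aemeasurable hf).congr ?_
  filter_upwards [hfs] with a ha using piecewise_eq_of_mem _ _ _ ha

lemma ae_eq_zero_of_add_le_add_div_two {α : Type*} [MeasurableSpace α] {μ : Measure α}
    {f g h Q : α → ℝ} (hf : Integrable f μ) (hg : Integrable g μ) (hh : Integrable h μ)
    (hfh : ∫ a, f a ∂μ ≤ ∫ a, h a ∂μ) (hgh : ∫ a, g a ∂μ ≤ ∫ a, h a ∂μ)
    (hQ0 : 0 ≤ᵐ[μ] Q) (hQ : ∀ᵐ a ∂μ, h a + Q a ≤ (f a + g a) / 2) : Q =ᵐ[μ] 0 := by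
  have hfg : Integrable (fun a => (f a + g a) / 2) μ := (hf.add hg).div_const 2
  have hD : Integrable (fun a => (f a + g a) / 2 - h a) μ := hfg.sub hh
  have hDnn : 0 ≤ᵐ[μ] fun a => (f a + g a) / 2 - h a := by
    filter_upwards [hQ0, hQ] with a h0 h1 using by linarith
  have hDint : ∫ a, ((f a + g a) / 2 - h a) ∂μ = 0 := by
    refine le_antisymm ?_ (integral_nonneg_of_ae hDnn)
    rw [integral_sub hfg hh, integral_div, integral_add hf hg]
    linarith
  filter_upwards [hQ0, hQ, (integral_eq_zero_iff_of_nonneg_ae hDnn hD).1 hDint] with a h0 h1 h2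
  simp only [Pi.zero_apply] at h0 h2 ⊢
  linarith

noncomputable def discreteLagrangian (N : ℕ) (L G : ℝ → ℝ) (V : ℝ → ℝ → ℝ)
    (x v : ℝ → ℕ → ℝ) (s : ℝ) : ℝ :=
  (1 / (N:ℝ)) * ∑ i ∈ Finset.Icc 1 N, (L (v s i) - V (x s i) s)
    + (1 / (N:ℝ)) * ∑ i ∈ Finset.Icc 2 N, G (((1:ℝ)/N) / (x s i - x s (i - 1)))

def CollisionFreeAE (N : ℕ) (T : ℝ) (x : ℝ → ℕ → ℝ) : Prop :=
  ∀ᵐ s ∂(volume.restrict (Icc (0:ℝ) T)), ∀ i ∈ Finset.Icc 2 N, x s (i - 1) < x s i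

section Functional

variable {N : ℕ} {T : ℝ} {L G : ℝ → ℝ} {V : ℝ → ℝ → ℝ} {x v : ℝ → ℕ → ℝ}

lemma CollisionFreeAE.midpoint {y : ℝ → ℕ → ℝ} (hx : CollisionFreeAE N T x)
    (hy : CollisionFreeAE N T y) : CollisionFreeAE N T (fun t i => (x t i + y t i) / 2) := by
  filter_upwards [hx, hy] with s hxs hys i hi
  linarith [hxs i hi, hys i hi]

lemma Jt_ne_top_iff : Jt N T L G V x v ≠ ⊤ ↔
    IntegrableOn (discreteLagrangian N L G V x v) (Icc 0 T) ∧ CollisionFreeAE N T x := by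
  rw [Jt]
  split_ifs with h
  · exact iff_of_true (EReal.coe_ne_top _) h
  · exact iff_of_false (fun h' => h' rfl) h

lemma Jt_eq_integral (h : Jt N T L G V x v ≠ ⊤) :
    Jt N T L G V x v = ((∫ s in Icc 0 T, discreteLagrangian N L G V x v s : ℝ) : EReal) :=
  if_pos (Jt_ne_top_iff.1 h)

lemma integral_le_integral_of_Jt_le {y w : ℝ → ℕ → ℝ} (hx : Jt N T L G V x v ≠ ⊤)
    (hy : Jt N T L G V y w ≠ ⊤) (h : Jt N T L G V x v ≤ Jt N T L G V y w) :
    ∫ s in Icc 0 T, discreteLagrangian N L G V x v s ≤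
      ∫ s in Icc 0 T, discreteLagrangian N L G V y w s := by
  rw [Jt_eq_integral hx, Jt_eq_integral hy] at h
  exact_mod_cast h

end Functional

namespace Adm

variable {N : ℕ} {T q : ℝ} {x0 xT : ℕ → ℝ} {x v y w : ℝ → ℕ → ℝ} {i : ℕ}

lemma integrableOn_velocity (hq : 1 ≤ q) (hx : Adm N T q x0 xT x v) (hi : i ∈ Finset.Icc 1 N) :
    IntegrableOn (fun s => v s i) (Icc 0 T) :=
  (hx.1 i hi).integrable (ENNReal.one_le_ofReal.2 hq)

lemma intervalIntegrable_velocity (hq : 1 ≤ q) (hx : Adm N T q x0 xT x v)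
    (hi : i ∈ Finset.Icc 1 N) {t : ℝ} (ht : t ∈ Icc 0 T) :
    IntervalIntegrable (fun s => v s i) volume 0 t :=
  (intervalIntegrable_iff_integrableOn_Icc_of_le ht.1).2
    ((hx.integrableOn_velocity hq hi).mono_set (Icc_subset_Icc_right ht.2))

lemma continuousOn (hq : 1 ≤ q) (hT : 0 ≤ T) (hx : Adm N T q x0 xT x v)
    (hi : i ∈ Finset.Icc 1 N) : ContinuousOn (fun t => x t i) (Icc 0 T) := by
  have h := intervalIntegral.continuousOn_primitive_interval' (μ := volume)
    (hx.intervalIntegrable_velocity hq hi ⟨hT, le_rfl⟩) left_mem_uIcc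
  rw [uIcc_of_le hT] at h
  exact (continuousOn_const.add h).congr fun t ht => hx.2.1 i hi t ht

lemma midpoint (hq : 1 ≤ q) (hx : Adm N T q x0 xT x v) (hy : Adm N T q x0 xT y w) :
    Adm N T q x0 xT (fun t i => (x t i + y t i) / 2) (fun s i => (v s i + w s i) / 2) := by
  refine ⟨fun i hi => by simpa only [Pi.add_apply, div_eq_mul_inv] using
      ((hx.1 i hi).add (hy.1 i hi)).mul_const (2⁻¹ : ℝ), fun i hi t ht => ?_,
    fun i hi => by simp only [hx.2.2.1 i hi, hy.2.2.1 i hi, add_self_div_two],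
    fun t ht i hi => by linarith [hx.2.2.2 t ht i hi, hy.2.2.2 t ht i hi]⟩
  dsimp only
  rw [hx.2.1 i hi t ht, hy.2.1 i hi t ht, intervalIntegral.integral_div,
    intervalIntegral.integral_add (hx.intervalIntegrable_velocity hq hi ht)
      (hy.intervalIntegrable_velocity hq hi ht)]
  ring

lemma eq_of_ae_eq {q' : ℝ} {xT' : ℕ → ℝ} (hx : Adm N T q x0 xT x v)
    (hy : Adm N T q' x0 xT' y w)
    (hvw : ∀ᵐ s ∂(volume.restrict (Icc (0:ℝ) T)), ∀ i ∈ Finset.Icc 1 N, v s i = w s i) :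
    ∀ t ∈ Icc (0:ℝ) T, ∀ i ∈ Finset.Icc 1 N, x t i = y t i := by
  intro t ht i hi
  rw [hx.2.1 i hi t ht, hy.2.1 i hi t ht, intervalIntegral.integral_of_le ht.1,
    intervalIntegral.integral_of_le ht.1]
  congr 1
  refine setIntegral_congr_ae measurableSet_Ioc ?_
  filter_upwards [(ae_restrict_iff' measurableSet_Icc).1 hvw] with s hs hst
  exact hs ⟨hst.1.le, hst.2.trans ht.2⟩ i hi

end Adm

section Lagrangian

variable {N : ℕ} {T q : ℝ} {L G : ℝ → ℝ} {V : ℝ → ℝ → ℝ} {x0 xT : ℕ → ℝ}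
  {x v y w : ℝ → ℕ → ℝ}

lemma ContinuousOn.comp_graph
    (hV : ContinuousOn (fun p : ℝ × ℝ => V p.1 p.2) (univ ×ˢ Icc 0 T)) {c : ℝ → ℝ}
    (hc : ContinuousOn c (Icc 0 T)) : ContinuousOn (fun s => V (c s) s) (Icc 0 T) :=
  hV.comp (hc.prodMk continuousOn_id) fun _ hs => ⟨trivial, hs⟩

lemma continuousOn_gap (hx : ∀ i ∈ Finset.Icc 1 N, ContinuousOn (fun t => x t i) (Icc 0 T))
    {i : ℕ} (hi : i ∈ Finset.Icc 2 N) :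
    ContinuousOn (fun t => x t i - x t (i - 1)) (Icc 0 T) := by
  rw [Finset.mem_Icc] at hi
  exact (hx i (Finset.mem_Icc.2 (by omega))).sub (hx (i - 1) (Finset.mem_Icc.2 (by omega)))

lemma aestronglyMeasurable_discreteLagrangian (hL : Continuous L)
    (hG : ContinuousOn (fun r => G (((1:ℝ)/N) / r)) (Ioi 0))
    (hV : ContinuousOn (fun p : ℝ × ℝ => V p.1 p.2) (univ ×ˢ Icc 0 T))
    (hx : ∀ i ∈ Finset.Icc 1 N, ContinuousOn (fun t => x t i) (Icc 0 T))
    (hv : ∀ i ∈ Finset.Icc 1 N,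
      AEStronglyMeasurable (fun s => v s i) (volume.restrict (Icc (0:ℝ) T)))
    (hgap : CollisionFreeAE N T x) :
    AEStronglyMeasurable (discreteLagrangian N L G V x v) (volume.restrict (Icc (0:ℝ) T)) := by
  have hLV : ∀ i ∈ Finset.Icc 1 N, AEStronglyMeasurable (fun s => L (v s i) - V (x s i) s)
      (volume.restrict (Icc (0:ℝ) T)) := fun i hi =>
    (hL.comp_aestronglyMeasurable (hv i hi)).sub
      ((hV.comp_graph (hx i hi)).aestronglyMeasurable measurableSet_Icc)
  have hGx : ∀ i ∈ Finset.Icc 2 N, AEStronglyMeasurable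
      (fun s => G (((1:ℝ)/N) / (x s i - x s (i - 1)))) (volume.restrict (Icc (0:ℝ) T)) := by
    intro i hi
    refine (hG.comp_aemeasurable_of_ae_mem measurableSet_Ioi
      ((continuousOn_gap hx hi).aestronglyMeasurable measurableSet_Icc).aemeasurable
      ?_).aestronglyMeasurable
    filter_upwards [hgap] with s hs using sub_pos.2 (hs i hi)
  exact ((Finset.aestronglyMeasurable_fun_sum _ hLV).const_mul _).add
    ((Finset.aestronglyMeasurable_fun_sum _ hGx).const_mul _)

lemma integrableOn_discreteLagrangian_of_ae_le (hL : ConvexOn ℝ univ L)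
    (hG : ConvexOn ℝ (Ioi 0) (fun r => G (((1:ℝ)/N) / r)))
    (hV : ContinuousOn (fun p : ℝ × ℝ => V p.1 p.2) (univ ×ˢ Icc 0 T))
    (hx : ∀ i ∈ Finset.Icc 1 N, ContinuousOn (fun t => x t i) (Icc 0 T))
    (hv : ∀ i ∈ Finset.Icc 1 N, IntegrableOn (fun s => v s i) (Icc 0 T))
    (hgap : CollisionFreeAE N T x)
    {g : ℝ → ℝ} (hg : IntegrableOn g (Icc 0 T))
    (hle : ∀ᵐ s ∂(volume.restrict (Icc (0:ℝ) T)), discreteLagrangian N L G V x v s ≤ g s) :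
    IntegrableOn (discreteLagrangian N L G V x v) (Icc 0 T) := by
  set mL := derivWithin L (Ioi 0) 0
  set mG := derivWithin (fun r => G (((1:ℝ)/N) / r)) (Ioi 1) 1
  -- supporting lines of `L` at `0` and of `r ↦ G (δ / r)` at `1`
  refine integrable_of_le_of_le (g₁ := fun s =>
      (1 / (N:ℝ)) * ∑ i ∈ Finset.Icc 1 N, (L 0 + mL * v s i - V (x s i) s)
      + (1 / (N:ℝ)) * ∑ i ∈ Finset.Icc 2 N,
          (G (((1:ℝ)/N) / 1) + mG * ((x s i - x s (i - 1)) - 1)))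
    (aestronglyMeasurable_discreteLagrangian (continuousOn_univ.1 (hL.continuousOn isOpen_univ))
      (hG.continuousOn isOpen_Ioi) hV hx (fun i hi => (hv i hi).aestronglyMeasurable) hgap)
    ?_ hle ?_ hg
  · filter_upwards [hgap] with s hs
    unfold discreteLagrangian
    gcongr with i hi i hi
    · simpa using hL.add_rightDeriv_mul_sub_le (a := 0) (by simp) (mem_univ (v s i))
    · exact hG.add_rightDeriv_mul_sub_le (by simp) (sub_pos.2 (hs i hi))
  · refine (integrable_finsetSum _ fun i hi => ?_).const_mul _ |>.add
      ((integrable_finsetSum _ fun i hi => ?_).const_mul _)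
    · exact ((integrable_const _).add ((hv i hi).const_mul _)).sub
        ((hV.comp_graph (hx i hi)).integrableOn_Icc)
    · exact (integrable_const _).add
        (((continuousOn_gap hx hi).integrableOn_Icc.sub (integrable_const _)).const_mul _)

lemma discreteLagrangian_midpoint_add_le {m s : ℝ}
    (hL : StrongConvexOn univ m L) (hG : ConvexOn ℝ (Ioi 0) (fun r => G (((1:ℝ)/N) / r)))
    (hV : ConcaveOn ℝ univ (fun z => V z s))
    (hx : ∀ i ∈ Finset.Icc 2 N, x s (i - 1) < x s i)
    (hy : ∀ i ∈ Finset.Icc 2 N, y s (i - 1) < y s i) :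
    discreteLagrangian N L G V (fun t i => (x t i + y t i) / 2) (fun t i => (v t i + w t i) / 2) s
        + m / (8 * N) * ∑ i ∈ Finset.Icc 1 N, (v s i - w s i) ^ 2
      ≤ (discreteLagrangian N L G V x v s + discreteLagrangian N L G V y w s) / 2 := by
  have hLV : ∀ i ∈ Finset.Icc 1 N,
      L ((v s i + w s i) / 2) - V ((x s i + y s i) / 2) s + m / 8 * (v s i - w s i) ^ 2
        ≤ ((L (v s i) - V (x s i) s) + (L (w s i) - V (y s i) s)) / 2 := fun i _ => by
    have hVi := hV.neg.map_add_div_two_le (mem_univ (x s i)) (mem_univ (y s i))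
    simp only [Pi.neg_apply] at hVi
    linarith [hL.map_add_div_two_add_le (v s i) (w s i)]
  have hGm : ∀ i ∈ Finset.Icc 2 N,
      G (((1:ℝ)/N) / ((x s i + y s i) / 2 - (x s (i - 1) + y s (i - 1)) / 2))
        ≤ (G (((1:ℝ)/N) / (x s i - x s (i - 1)))
          + G (((1:ℝ)/N) / (y s i - y s (i - 1)))) / 2 :=
    fun i hi => by
      convert hG.map_add_div_two_le (sub_pos.2 (hx i hi)) (sub_pos.2 (hy i hi)) using 3
      ring
  have h1 := Finset.sum_le_sum hLV
  have h2 := Finset.sum_le_sum hGm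
  simp only [Finset.sum_add_distrib, ← Finset.sum_div, ← Finset.mul_sum] at h1 h2
  unfold discreteLagrangian
  linear_combination (1 / (N:ℝ)) * h1 + (1 / (N:ℝ)) * h2

lemma ae_discreteLagrangian_midpoint_add_le {m : ℝ} (hL : StrongConvexOn univ m L)
    (hG : ConvexOn ℝ (Ioi 0) (fun r => G (((1:ℝ)/N) / r)))
    (hV : ∀ t ∈ Icc (0:ℝ) T, ConcaveOn ℝ univ (fun z => V z t))
    (hx : CollisionFreeAE N T x) (hy : CollisionFreeAE N T y) :
    ∀ᵐ s ∂(volume.restrict (Icc (0:ℝ) T)),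
      discreteLagrangian N L G V (fun t i => (x t i + y t i) / 2) (fun t i => (v t i + w t i) / 2) s
          + m / (8 * N) * ∑ i ∈ Finset.Icc 1 N, (v s i - w s i) ^ 2
        ≤ (discreteLagrangian N L G V x v s + discreteLagrangian N L G V y w s) / 2 := by
  filter_upwards [hx, hy, ae_restrict_mem measurableSet_Icc] with s hxs hys hs
  exact discreteLagrangian_midpoint_add_le hL hG (hV s hs) hxs hys

lemma Jt_midpoint_ne_top {m : ℝ} (hq : 1 ≤ q) (hT : 0 ≤ T) (hL : StrongConvexOn univ m L)
    (hm : 0 ≤ m) (hG : ConvexOn ℝ (Ioi 0) (fun r => G (((1:ℝ)/N) / r)))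
    (hVc : ContinuousOn (fun p : ℝ × ℝ => V p.1 p.2) (univ ×ˢ Icc 0 T))
    (hV : ∀ t ∈ Icc (0:ℝ) T, ConcaveOn ℝ univ (fun z => V z t))
    (hx : Adm N T q x0 xT x v) (hy : Adm N T q x0 xT y w)
    (hxfin : Jt N T L G V x v ≠ ⊤) (hyfin : Jt N T L G V y w ≠ ⊤) :
    Jt N T L G V (fun t i => (x t i + y t i) / 2) (fun s i => (v s i + w s i) / 2) ≠ ⊤ := by
  obtain ⟨hFx, hgx⟩ := Jt_ne_top_iff.1 hxfin
  obtain ⟨hFy, hgy⟩ := Jt_ne_top_iff.1 hyfin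
  have hz := hx.midpoint hq hy
  have hgz := hgx.midpoint hgy
  refine Jt_ne_top_iff.2 ⟨integrableOn_discreteLagrangian_of_ae_le
    (hL.convexOn fun r => by positivity) hG hVc (fun i hi => hz.continuousOn hq hT hi)
    (fun i hi => hz.integrableOn_velocity hq hi) hgz ((hFx.add hFy).div_const 2) ?_, hgz⟩
  filter_upwards [ae_discreteLagrangian_midpoint_add_le (v := v) (w := w) hL hG hV hgx hgy]
    with s hs
  have : 0 ≤ m / (8 * N) * ∑ i ∈ Finset.Icc 1 N, (v s i - w s i) ^ 2 := by positivity
  simp only [Pi.add_apply]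
  linarith

end Lagrangian

/-- Uniqueness of minimizers of the discrete utility functional: if `L` is uniformly
convex, `s ↦ G(δ/s)` is convex, and `V` is continuous and concave in its first variable,
then any two admissible minimizers with finite value coincide on `[0,T]`. -/
theorem stmt_5
    (N : ℕ) (hN : 2 ≤ N) (T : ℝ) (hT : 0 < T)
    (q θ : ℝ) (hq : 1 < q) (hθ : 0 < θ)
    (L : ℝ → ℝ)
    (hLuc : ∀ u v : ℝ, ∀ l : ℝ, 0 ≤ l → l ≤ 1 →
      L (l * u + (1 - l) * v) ≤ l * L u + (1 - l) * L v - θ * l * (1 - l) * (u - v) ^ 2)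
    (G : ℝ → ℝ)
    (hGconv : ConvexOn ℝ (Set.Ioi 0) (fun s => G (((1:ℝ)/N) / s)))
    (V : ℝ → ℝ → ℝ)
    (hVc : ContinuousOn (fun p : ℝ × ℝ => V p.1 p.2) (Set.univ ×ˢ Set.Icc 0 T))
    (hVconc : ∀ t ∈ Set.Icc (0:ℝ) T, ConcaveOn ℝ Set.univ (fun z => V z t))
    (x0 xT : ℕ → ℝ)
    (x v y w : ℝ → ℕ → ℝ)
    (hx : Adm N T q x0 xT x v) (hy : Adm N T q x0 xT y w)
    (hxfin : Jt N T L G V x v ≠ ⊤) (hyfin : Jt N T L G V y w ≠ ⊤)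
    (hxmin : ∀ z u, Adm N T q x0 xT z u → Jt N T L G V x v ≤ Jt N T L G V z u)
    (hymin : ∀ z u, Adm N T q x0 xT z u → Jt N T L G V y w ≤ Jt N T L G V z u) :
    ∀ t ∈ Set.Icc (0:ℝ) T, ∀ i ∈ Finset.Icc 1 N, x t i = y t i := by
  have hc : 0 < 2 * θ / (8 * N) := by
    have : (0:ℝ) < N := Nat.cast_pos.2 (by omega)
    positivity
  have hL : StrongConvexOn univ (2 * θ) L := strongConvexOn_univ_of_forall_le hLuc
  obtain ⟨hFx, hgx⟩ := Jt_ne_top_iff.1 hxfin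
  obtain ⟨hFy, hgy⟩ := Jt_ne_top_iff.1 hyfin
  have hz := hx.midpoint hq.le hy
  have hzfin := Jt_midpoint_ne_top hq.le hT.le hL (by positivity) hGconv hVc hVconc hx hy
    hxfin hyfin
  have hQ : (fun s => 2 * θ / (8 * N) * ∑ i ∈ Finset.Icc 1 N, (v s i - w s i) ^ 2)
      =ᵐ[volume.restrict (Icc (0:ℝ) T)] 0 :=
    ae_eq_zero_of_add_le_add_div_two hFx hFy (Jt_ne_top_iff.1 hzfin).1
      (integral_le_integral_of_Jt_le hxfin hzfin (hxmin _ _ hz))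
      (integral_le_integral_of_Jt_le hyfin hzfin (hymin _ _ hz))
      (ae_of_all _ fun s => by positivity)
      (ae_discreteLagrangian_midpoint_add_le hL hGconv hVconc hgx hgy)
  refine hx.eq_of_ae_eq hy ?_
  filter_upwards [hQ] with s hs i hi
  have hsum := (mul_eq_zero.1 hs).resolve_left hc.ne'
  exact sub_eq_zero.1 (pow_eq_zero_iff two_ne_zero |>.1
    ((Finset.sum_eq_zero_iff_of_nonneg fun j _ => sq_nonneg (v s j - w s j)).1 hsum i hi))
end

section
/- Fix N ∈ ℕ with N ≥ 2, δ = 1/N, and t ∈ [0, T]. Let L : ℝ → ℝ be convex, let G ∈ C²((0, ∞); ℝ) satisfy r G''(r) + 2 G'(r) ≥ 0 for all r > 0, and let V(·, t) : ℝ → ℝ be concave. Then the function F(x, u) = (1/N) Σ_{i=1}^{N} L(uᵢ) + (1/N) Σ_{i=2}^{N} G(δ/(xᵢ − x_{i−1})) − (1/N) Σ_{i=1}^{N} V(xᵢ, t) is convex on the set {x ∈ ℝ^N : x₁ < x₂ < ⋯ < x_N} × ℝ^N. -/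
/-!
`F` is a nonnegative multiple of `Σ L(uᵢ) + Σ H(xᵢ - xᵢ₋₁) - Σ V(xᵢ)` with
`H r = G (δ / r)`. Each sum is a convex (resp. concave) function of one real variable
composed with a linear map, and on ordered configurations the gaps `xᵢ - xᵢ₋₁` stay in
`(0, ∞)`. Convexity of `H` there is the hypothesis on `G`: with `s = δ / r`,
`H''(r) = δ / r³ · (s G''(s) + 2 G'(s))`.
-/

open Set

section FinsetSum

variable {𝕜 E β ι : Type*} [Semiring 𝕜] [PartialOrder 𝕜] [AddCommMonoid E] [SMul 𝕜 E]
  [AddCommMonoid β] [PartialOrder β] [IsOrderedAddMonoid β] [Module 𝕜 β]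
  {s : Set E} {t : Finset ι} {f : ι → E → β}

theorem ConvexOn.finsetSum (hs : Convex 𝕜 s) (hf : ∀ i ∈ t, ConvexOn 𝕜 s (f i)) :
    ConvexOn 𝕜 s fun x => ∑ i ∈ t, f i x := by
  classical
  induction t using Finset.induction_on with
  | empty => simpa using convexOn_const 0 hs
  | insert a t hat ih =>
    simp_rw [Finset.sum_insert hat]
    exact (hf a (t.mem_insert_self a)).add (ih fun i hi => hf i (Finset.mem_insert_of_mem hi))

theorem ConcaveOn.finsetSum (hs : Convex 𝕜 s) (hf : ∀ i ∈ t, ConcaveOn 𝕜 s (f i)) :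
    ConcaveOn 𝕜 s fun x => ∑ i ∈ t, f i x :=
  ConvexOn.finsetSum (β := βᵒᵈ) hs hf

end FinsetSum

theorem convexOn_comp_const_div {G : ℝ → ℝ} (hG : ContDiffOn ℝ 2 G (Ioi 0))
    (hGineq : ∀ r : ℝ, 0 < r → 0 ≤ r * deriv (deriv G) r + 2 * deriv G r)
    {δ : ℝ} (hδ : 0 ≤ δ) : ConvexOn ℝ (Ioi 0) fun r => G (δ / r) := by
  rcases hδ.eq_or_lt with rfl | hδ
  · simpa using convexOn_const (G 0) (convex_Ioi (0:ℝ))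
  have hG' : ∀ s : ℝ, 0 < s → HasDerivAt G (deriv G s) s := fun s hs =>
    ((hG.differentiableOn two_ne_zero).differentiableAt (Ioi_mem_nhds hs)).hasDerivAt
  have hG'' : ∀ s : ℝ, 0 < s → HasDerivAt (deriv G) (deriv (deriv G) s) s := fun s hs =>
    (((hG.deriv_of_isOpen isOpen_Ioi (by norm_num)).differentiableOn one_ne_zero).differentiableAt
      (Ioi_mem_nhds hs)).hasDerivAt
  have hdiv : ∀ r : ℝ, 0 < r → HasDerivAt (fun r => δ / r) (-δ / r ^ 2) r := fun r hr =>
    ((hasDerivAt_const r δ).fun_div (hasDerivAt_id' r) hr.ne').congr_deriv (by field_simp; ring)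
  have hdiv' : ∀ r : ℝ, 0 < r → HasDerivAt (fun r => -δ / r ^ 2) (2 * δ / r ^ 3) r :=
    fun r hr => ((hasDerivAt_const r (-δ)).fun_div (hasDerivAt_pow 2 r)
      (pow_ne_zero 2 hr.ne')).congr_deriv (by field_simp; ring)
  refine convexOn_of_hasDerivWithinAt2_nonneg (convex_Ioi 0)
    (hG.continuousOn.comp (continuousOn_const.div continuousOn_id fun r hr => hr.ne')
      fun r hr => div_pos hδ hr)
    (f' := fun r => deriv G (δ / r) * (-δ / r ^ 2))
    (f'' := fun r => deriv (deriv G) (δ / r) * (-δ / r ^ 2) * (-δ / r ^ 2)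
      + deriv G (δ / r) * (2 * δ / r ^ 3)) ?_ ?_ ?_ <;> rw [interior_Ioi] <;> intro r (hr : 0 < r)
  · exact ((hG' _ (div_pos hδ hr)).comp r (hdiv r hr)).hasDerivWithinAt
  · exact (((hG'' _ (div_pos hδ hr)).comp r (hdiv r hr)).mul (hdiv' r hr)).hasDerivWithinAt
  · refine (mul_nonneg (div_pos hδ (pow_pos hr 3)).le (hGineq _ (div_pos hδ hr))).trans_eq ?_
    field_simp

theorem convex_setOf_lt_succ (N : ℕ) :
    Convex ℝ {z : ℕ → ℝ | ∀ i, 1 ≤ i → i < N → z i < z (i + 1)} := by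
  simp only [ofPred_forall]
  refine convex_iInter fun i => convex_iInter fun _ => convex_iInter fun _ => ?_
  have hlin : IsLinearMap ℝ fun z : ℕ → ℝ => z (i + 1) - z i :=
    ⟨fun x y => by simp only [Pi.add_apply]; ring,
      fun c x => by simp only [Pi.smul_apply, smul_eq_mul]; ring⟩
  simpa only [sub_pos] using convex_halfSpace_gt hlin 0

theorem ConvexOn.finsetSum_comp_apply {ι : Type*} {L : ℝ → ℝ} (hL : ConvexOn ℝ univ L)
    (t : Finset ι) : ConvexOn ℝ univ fun x : ι → ℝ => ∑ i ∈ t, L (x i) :=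
  ConvexOn.finsetSum convex_univ fun i _ =>
    hL.comp_linearMap (LinearMap.proj (R := ℝ) (φ := fun _ : ι => ℝ) i)

theorem ConcaveOn.finsetSum_comp_apply {ι : Type*} {V : ℝ → ℝ} (hV : ConcaveOn ℝ univ V)
    (t : Finset ι) : ConcaveOn ℝ univ fun x : ι → ℝ => ∑ i ∈ t, V (x i) :=
  ConcaveOn.finsetSum convex_univ fun i _ =>
    hV.comp_linearMap (LinearMap.proj (R := ℝ) (φ := fun _ : ι => ℝ) i)

theorem ConvexOn.finsetSum_comp_sub_pred {H : ℝ → ℝ} (hH : ConvexOn ℝ (Ioi 0) H) (N : ℕ) :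
    ConvexOn ℝ {z : ℕ → ℝ | ∀ i, 1 ≤ i → i < N → z i < z (i + 1)}
      fun z => ∑ i ∈ Finset.Icc 2 N, H (z i - z (i - 1)) := by
  refine ConvexOn.finsetSum (convex_setOf_lt_succ N) fun i hi => ?_
  refine (hH.comp_linearMap
    (LinearMap.proj (R := ℝ) (φ := fun _ : ℕ => ℝ) i - LinearMap.proj (i - 1))).subset
    (fun z hz => ?_) (convex_setOf_lt_succ N)
  obtain ⟨hi2, hiN⟩ := Finset.mem_Icc.1 hi
  have h := hz (i - 1) (by omega) (by omega)
  rw [Nat.sub_add_cancel (by omega)] at h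
  exact sub_pos.2 h

theorem stmt_6_general
    (N : ℕ)
    (L : ℝ → ℝ) (hL : ConvexOn ℝ Set.univ L)
    (G : ℝ → ℝ) (hG : ContDiffOn ℝ 2 G (Set.Ioi 0))
    (hGineq : ∀ r : ℝ, 0 < r → 0 ≤ r * deriv (deriv G) r + 2 * deriv G r)
    (Vt : ℝ → ℝ) (hV : ConcaveOn ℝ Set.univ Vt) :
    ConvexOn ℝ
      (({z : ℕ → ℝ | ∀ i, 1 ≤ i → i < N → z i < z (i + 1)} : Set (ℕ → ℝ)) ×ˢ
        (Set.univ : Set (ℕ → ℝ)))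
      (fun p : (ℕ → ℝ) × (ℕ → ℝ) =>
        (1 / (N:ℝ)) * ∑ i ∈ Finset.Icc 1 N, L (p.2 i)
        + (1 / (N:ℝ)) * ∑ i ∈ Finset.Icc 2 N, G (((1:ℝ)/N) / (p.1 i - p.1 (i - 1)))
        - (1 / (N:ℝ)) * ∑ i ∈ Finset.Icc 1 N, Vt (p.1 i)) := by
  have hδ : (0:ℝ) ≤ 1 / N := by positivity
  have hS := (convex_setOf_lt_succ N).prod (convex_univ (E := ℕ → ℝ))
  have kinetic := ((hL.finsetSum_comp_apply (Finset.Icc 1 N)).comp_linearMap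
    (LinearMap.snd ℝ (ℕ → ℝ) (ℕ → ℝ))).subset (subset_univ _) hS
  have interaction := (((convexOn_comp_const_div hG hGineq hδ).finsetSum_comp_sub_pred
    N).comp_linearMap (LinearMap.fst ℝ (ℕ → ℝ) (ℕ → ℝ))).subset (fun _ hp => hp.1) hS
  have potential := ((hV.finsetSum_comp_apply (Finset.Icc 1 N)).comp_linearMap
    (LinearMap.fst ℝ (ℕ → ℝ) (ℕ → ℝ))).subset (subset_univ _) hS
  exact ((kinetic.smul hδ).add (interaction.smul hδ)).sub (potential.smul hδ)

/-- Convexity of the discrete Lagrangian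
`F(x,u) = (1/N) Σᵢ L(uᵢ) + (1/N) Σ_{i≥2} G(δ/(xᵢ−x_{i−1})) − (1/N) Σᵢ V(xᵢ,t)`
on the set of strictly ordered configurations times all velocities. -/
theorem stmt_6
    (N : ℕ) (hN : 2 ≤ N)
    (L : ℝ → ℝ) (hL : ConvexOn ℝ Set.univ L)
    (G : ℝ → ℝ) (hG : ContDiffOn ℝ 2 G (Set.Ioi 0))
    (hGineq : ∀ r : ℝ, 0 < r → 0 ≤ r * deriv (deriv G) r + 2 * deriv G r)
    (Vt : ℝ → ℝ) (hV : ConcaveOn ℝ Set.univ Vt) :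
    ConvexOn ℝ
      (({z : ℕ → ℝ | ∀ i, 1 ≤ i → i < N → z i < z (i + 1)} : Set (ℕ → ℝ)) ×ˢ
        (Set.univ : Set (ℕ → ℝ)))
      (fun p : (ℕ → ℝ) × (ℕ → ℝ) =>
        (1 / (N:ℝ)) * ∑ i ∈ Finset.Icc 1 N, L (p.2 i)
        + (1 / (N:ℝ)) * ∑ i ∈ Finset.Icc 2 N, G (((1:ℝ)/N) / (p.1 i - p.1 (i - 1)))
        - (1 / (N:ℝ)) * ∑ i ∈ Finset.Icc 1 N, Vt (p.1 i)) :=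
  stmt_6_general N L hL G hG hGineq Vt hV
end

section
/- Let x₁, …, x_N be as in the periodic setting, with L ∈ C²(ℝ; ℝ) and G ∈ C¹((0, ∞); ℝ), solving the Euler–Lagrange system with zero potential gradient. Then the total discrete energy t ↦ Σ_{i=1}^{N} [ L'(ẋᵢ(t)) ẋᵢ(t) − L(ẋᵢ(t)) − G(Rᵢ(t)) ] is constant on [0, T]; equivalently, the semi-discrete quantity Σ_{i=1}^{N} E^i(uᵢ, Rᵢ)(xᵢ − x_{i−1}) with E^i(u, R) = (L'(u) u − L(u) − G(R)) R and uᵢ = ẋᵢ is conserved in time. -/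
open Set Finset

/-!
Since `dRᵢ/dt = −N Rᵢ² (ẋᵢ − ẋᵢ₋₁)`, the Euler–Lagrange equation shows that the energy
`L'(ẋᵢ) ẋᵢ − L(ẋᵢ) − G(Rᵢ)` of the `i`-th particle changes at rate `Fᵢ₊₁ − Fᵢ`, where
`Fⱼ = N G'(Rⱼ) Rⱼ² ẋⱼ₋₁` is the flux through the `j`-th gap. Periodicity of the chain makes `F`
`N`-periodic in `j`, so the total rate telescopes to zero.
-/

theorem Finset.sum_Icc_one_sub_of_periodic {M : Type*} [AddCommGroup M] {f : ℤ → M} {n : ℕ}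
    (hf : Function.Periodic f n) : ∑ i ∈ Icc (1 : ℤ) n, (f (i + 1) - f i) = 0 := by
  suffices h : ∀ m : ℕ, ∑ i ∈ Icc (1 : ℤ) m, (f (i + 1) - f i) = f (m + 1) - f 1 by
    rw [h, add_comm, hf, sub_self]
  intro m
  induction m with
  | zero => simp
  | succ m ih =>
    rw [Nat.cast_succ, ← Finset.insert_Icc_right_eq_Icc_add_one (by omega),
      sum_insert (by simp), ih]
    abel

theorem hasDerivAt_deriv_comp_mul_sub_comp {L u : ℝ → ℝ} {u' t : ℝ} (hL : ContDiff ℝ 2 L)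
    (hu : HasDerivAt u u' t) :
    HasDerivAt (fun s ↦ deriv L (u s) * u s - L (u s)) (deriv (deriv L) (u t) * u' * u t) t := by
  have hL' := (hL.differentiable_deriv_two (u t)).hasDerivAt.comp t hu
  have hL'' := (hL.differentiable (by norm_num) (u t)).hasDerivAt.comp t hu
  exact ((hL'.mul hu).sub hL'').congr_deriv (by rw [Function.comp_apply]; ring)

section PeriodicChain

variable {N : ℕ} {x : ℤ → ℝ → ℝ}

theorem hasDerivAt_Rd {i : ℤ} {t a b : ℝ} (hw : x i t - x (i - 1) t ≠ 0)
    (ha : HasDerivAt (x i) a t) (hb : HasDerivAt (x (i - 1)) b t) :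
    HasDerivAt (Rd N x i) (-(N * Rd N x i t ^ 2 * (a - b))) t := by
  have h : HasDerivAt (Rd N x i) _ t :=
    (hasDerivAt_const t ((1 : ℝ) / N)).fun_div (ha.fun_sub hb) hw
  refine h.congr_deriv ?_
  rcases eq_or_ne (N : ℝ) 0 with hN | hN
  · simp [Rd, hN]
  · simp only [Rd]
    field_simp
    ring

theorem Rd_add_period (hper : ∀ i t, x (i + N) t = x i t + 1) (i : ℤ) (t : ℝ) :
    Rd N x (i + N) t = Rd N x i t := by
  rw [Rd, Rd, add_sub_right_comm, hper, hper]
  ring_nf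

theorem deriv_add_period (hper : ∀ i t, x (i + N) t = x i t + 1) (i : ℤ) :
    deriv (x (i + N)) = deriv (x i) := by
  ext t
  simp only [funext (hper i), deriv_add_const]

noncomputable def energyFlux (N : ℕ) (x : ℤ → ℝ → ℝ) (G : ℝ → ℝ) (j : ℤ) (t : ℝ) : ℝ :=
  N * (deriv G (Rd N x j t) * Rd N x j t ^ 2) * deriv (x (j - 1)) t

theorem energyFlux_periodic (hper : ∀ i t, x (i + N) t = x i t + 1) (G : ℝ → ℝ) (t : ℝ) :
    Function.Periodic (energyFlux N x G · t) N := by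
  intro j
  simp only [energyFlux, Rd_add_period hper, add_sub_right_comm, deriv_add_period hper]

theorem hasDerivAt_particleEnergy {L G : ℝ → ℝ} {i : ℤ} {t : ℝ} (hL : ContDiff ℝ 2 L)
    (hxi : ContDiff ℝ 2 (x i)) (hxi' : DifferentiableAt ℝ (x (i - 1)) t)
    (hG : DifferentiableAt ℝ G (Rd N x i t)) (hw : x i t - x (i - 1) t ≠ 0)
    (hEL : deriv (deriv L) (deriv (x i) t) * deriv (deriv (x i)) t =
        N * (deriv G (Rd N x (i + 1) t) * (Rd N x (i + 1) t) ^ 2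
          - deriv G (Rd N x i t) * (Rd N x i t) ^ 2)) :
    HasDerivAt (fun s ↦ deriv L (deriv (x i) s) * deriv (x i) s - L (deriv (x i) s)
        - G (Rd N x i s)) (energyFlux N x G (i + 1) t - energyFlux N x G i t) t := by
  have hu := (hxi.differentiable_deriv_two t).hasDerivAt
  have hR := hasDerivAt_Rd (N := N) hw (hxi.differentiable (by norm_num) t).hasDerivAt
    hxi'.hasDerivAt
  refine ((hasDerivAt_deriv_comp_mul_sub_comp hL hu).sub (hG.hasDerivAt.comp t hR)).congr_deriv ?_
  rw [hEL, energyFlux, energyFlux, add_sub_cancel_right]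
  ring

end PeriodicChain

theorem stmt_11_general
    (N : ℕ) (hN : 2 ≤ N) (T : ℝ)
    (x : ℤ → ℝ → ℝ)
    (hper : ∀ i t, x (i + N) t = x i t + 1)
    (hx : ∀ i, ContDiff ℝ 2 (x i))
    (hord : ∀ i, ∀ t ∈ Icc (0:ℝ) T, x i t < x (i + 1) t)
    (L : ℝ → ℝ) (hL : ContDiff ℝ 2 L)
    (G : ℝ → ℝ) (hG : ContDiffOn ℝ 1 G (Ioi 0))
    (hEL : ∀ i, ∀ t ∈ Icc (0:ℝ) T,
      deriv (deriv L) (deriv (x i) t) * deriv (deriv (x i)) t =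
        N * (deriv G (Rd N x (i + 1) t) * (Rd N x (i + 1) t) ^ 2
          - deriv G (Rd N x i t) * (Rd N x i t) ^ 2)) :
    ∀ t ∈ Icc (0:ℝ) T,
      ∑ i ∈ Finset.Icc (1:ℤ) (N:ℤ),
          (deriv L (deriv (x i) t) * deriv (x i) t - L (deriv (x i) t) - G (Rd N x i t)) =
        ∑ i ∈ Finset.Icc (1:ℤ) (N:ℤ),
          (deriv L (deriv (x i) 0) * deriv (x i) 0 - L (deriv (x i) 0) - G (Rd N x i 0)) := by
  have hgap : ∀ i, ∀ t ∈ Icc 0 T, 0 < x i t - x (i - 1) t := fun i t ht ↦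
    sub_pos.2 (by simpa using hord (i - 1) t ht)
  have hR : ∀ i, ∀ t ∈ Icc 0 T, 0 < Rd N x i t := fun i t ht ↦
    div_pos (one_div_pos.2 (Nat.cast_pos.2 (by omega))) (hgap i t ht)
  have hE : ∀ t ∈ Icc 0 T, HasDerivAt (fun s ↦ ∑ i ∈ Finset.Icc (1:ℤ) N,
      (deriv L (deriv (x i) s) * deriv (x i) s - L (deriv (x i) s) - G (Rd N x i s))) 0 t := by
    intro t ht
    rw [← sum_Icc_one_sub_of_periodic (energyFlux_periodic hper G t)]
    refine HasDerivAt.fun_sum fun i _ ↦ hasDerivAt_particleEnergy hL (hx i)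
      ((hx (i - 1)).differentiable (by norm_num) t) ?_ (hgap i t ht).ne' (hEL i t ht)
    exact (hG.differentiableOn one_ne_zero).differentiableAt (Ioi_mem_nhds (hR i t ht))
  exact constant_of_has_deriv_right_zero (fun t ht ↦ (hE t ht).continuousAt.continuousWithinAt)
    fun t ht ↦ (hE t (Ico_subset_Icc_self ht)).hasDerivWithinAt

/-- Conservation of the total discrete energy
`Σᵢ [L'(ẋᵢ(t)) ẋᵢ(t) − L(ẋᵢ(t)) − G(Rᵢ(t))]` along solutions of the periodic
Euler–Lagrange system with zero potential gradient. -/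
theorem stmt_11
    (N : ℕ) (hN : 2 ≤ N) (T : ℝ) (hT : 0 < T)
    (x : ℤ → ℝ → ℝ)
    (hper : ∀ i t, x (i + N) t = x i t + 1)
    (hx : ∀ i, ContDiff ℝ 2 (x i))
    (hord : ∀ i, ∀ t ∈ Icc (0:ℝ) T, x i t < x (i + 1) t)
    (L : ℝ → ℝ) (hL : ContDiff ℝ 2 L)
    (G : ℝ → ℝ) (hG : ContDiffOn ℝ 1 G (Ioi 0))
    (hEL : ∀ i, ∀ t ∈ Icc (0:ℝ) T,
      deriv (deriv L) (deriv (x i) t) * deriv (deriv (x i)) t =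
        N * (deriv G (Rd N x (i + 1) t) * (Rd N x (i + 1) t) ^ 2
          - deriv G (Rd N x i t) * (Rd N x i t) ^ 2)) :
    ∀ t ∈ Icc (0:ℝ) T,
      ∑ i ∈ Finset.Icc (1:ℤ) (N:ℤ),
          (deriv L (deriv (x i) t) * deriv (x i) t - L (deriv (x i) t) - G (Rd N x i t)) =
        ∑ i ∈ Finset.Icc (1:ℤ) (N:ℤ),
          (deriv L (deriv (x i) 0) * deriv (x i) 0 - L (deriv (x i) 0) - G (Rd N x i 0)) :=
  stmt_11_general N hN T x hper hx hord L hL G hG hEL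
end

section
/- Let N, N_T ∈ ℕ, Δt > 0, δ = 1/N, L ∈ C¹(ℝ; ℝ), and G ∈ C¹((0, ∞); ℝ). Let real numbers x_i^k for i ∈ ℤ (with the periodicity x_{i+N}^k = x_i^k + 1) and k = 0, …, N_T satisfy x_{i−1}^k < x_i^k for all i, k. Assume that for every i and every k with 1 ≤ k ≤ N_T − 1 the discrete stationarity condition holds: [L'((x_i^k − x_i^{k−1})/Δt) − L'((x_i^{k+1} − x_i^k)/Δt)]/Δt + G'(δ/(x_{i+1}^k − x_i^k)) · δ/(x_{i+1}^k − x_i^k)² − G'(δ/(x_i^k − x_{i−1}^k)) · δ/(x_i^k − x_{i−1}^k)² = 0. Then the sum Σ_{i=1}^{N} L'((x_i^{k+1} − x_i^k)/Δt) takes the same value for every k = 0, …, N_T − 1. -/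
open Set Finset

/-- Fully discrete conservation of momentum: if the positions `x_i^k` of `N` periodically
arranged particles satisfy the discrete stationarity conditions (optimality conditions of
the fully time-discretized functional with constant potential), then
`Σ_{i=1}^N L'((x_i^{k+1} − x_i^k)/Δt)` is independent of `k = 0, …, N_T − 1`. -/
theorem stmt_12
    (N NT : ℕ) (Δt : ℝ) (hΔt : 0 < Δt)
    (L : ℝ → ℝ) (hL : ContDiff ℝ 1 L)
    (G : ℝ → ℝ) (hG : ContDiffOn ℝ 1 G (Set.Ioi 0))
    (x : ℤ → ℕ → ℝ)
    (hper : ∀ i : ℤ, ∀ k : ℕ, x (i + N) k = x i k + 1)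
    (hord : ∀ i : ℤ, ∀ k : ℕ, k ≤ NT → x (i - 1) k < x i k)
    (hstat : ∀ i : ℤ, ∀ k : ℕ, 1 ≤ k → k + 1 ≤ NT →
      (deriv L ((x i k - x i (k - 1)) / Δt) - deriv L ((x i (k + 1) - x i k) / Δt)) / Δt
        + deriv G (((1:ℝ)/N) / (x (i + 1) k - x i k)) *
            (((1:ℝ)/N) / (x (i + 1) k - x i k) ^ 2)
        - deriv G (((1:ℝ)/N) / (x i k - x (i - 1) k)) *
            (((1:ℝ)/N) / (x i k - x (i - 1) k) ^ 2) = 0) :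
    ∀ k : ℕ, k < NT →
      ∑ i ∈ Finset.Icc (1:ℤ) (N:ℤ), deriv L ((x i (k + 1) - x i k) / Δt) =
        ∑ i ∈ Finset.Icc (1:ℤ) (N:ℤ), deriv L ((x i 1 - x i 0) / Δt) := by
  have key : ∀ k : ℕ, 1 ≤ k → k + 1 ≤ NT →
      ∑ i ∈ Finset.Icc (1:ℤ) (N:ℤ), deriv L ((x i (k + 1) - x i k) / Δt) =
      ∑ i ∈ Finset.Icc (1:ℤ) (N:ℤ), deriv L ((x i k - x i (k - 1)) / Δt) := by
    intro k hk1 hk2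
    rcases Nat.eq_zero_or_pos N with hN | hN
    · simp [hN]
    set B : ℤ → ℝ := fun i => deriv G (((1:ℝ)/N) / (x i k - x (i - 1) k)) *
        (((1:ℝ)/N) / (x i k - x (i - 1) k) ^ 2) with hBdef
    have hsum : ∑ i ∈ Finset.Icc (1:ℤ) (N:ℤ),
        ((deriv L ((x i k - x i (k - 1)) / Δt) - deriv L ((x i (k + 1) - x i k) / Δt)) / Δt
          + B (i + 1) - B i) = 0 := by
      apply Finset.sum_eq_zero
      intro i _
      have h := hstat i k hk1 hk2
      simp only [hBdef, add_sub_cancel_right]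
      exact h
    have hshift : ∑ i ∈ Finset.Icc (1:ℤ) (N:ℤ), B (i + 1)
        = ∑ i ∈ Finset.Icc (2:ℤ) ((N:ℤ) + 1), B i := by
      apply Finset.sum_nbij' (fun i => i + 1) (fun i => i - 1)
      · intro a ha; simp only [Finset.mem_Icc] at *; omega
      · intro a ha; simp only [Finset.mem_Icc] at *; omega
      · intro a _; ring
      · intro a _; ring
      · intro a _; rfl
    have hNZ : (1:ℤ) ≤ (N:ℤ) := by exact_mod_cast hN
    have hB1 : B ((N:ℤ) + 1) = B 1 := by
      have e1 : x ((N:ℤ) + 1) k = x 1 k + 1 := by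
        have := hper 1 k; rwa [add_comm] at this
      have e0 : x (N:ℤ) k = x 0 k + 1 := by
        have := hper 0 k; simpa using this
      simp only [hBdef, add_sub_cancel_right, e1, e0, sub_zero,
        add_sub_add_right_eq_sub]
      norm_num
    have hBsum : ∑ i ∈ Finset.Icc (1:ℤ) (N:ℤ), B (i + 1)
        = ∑ i ∈ Finset.Icc (1:ℤ) (N:ℤ), B i := by
      rw [hshift]
      have h2 : Finset.Icc (2:ℤ) ((N:ℤ) + 1)
          = insert ((N:ℤ) + 1) (Finset.Icc (2:ℤ) (N:ℤ)) := by
        ext a; simp only [Finset.mem_Icc, Finset.mem_insert]; omega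
      have h1 : Finset.Icc (1:ℤ) (N:ℤ)
          = insert (1:ℤ) (Finset.Icc (2:ℤ) (N:ℤ)) := by
        ext a; simp only [Finset.mem_Icc, Finset.mem_insert]; omega
      rw [h2, h1, Finset.sum_insert (by simp), Finset.sum_insert (by simp), hB1]
    have hzero : ∑ i ∈ Finset.Icc (1:ℤ) (N:ℤ),
        (deriv L ((x i k - x i (k - 1)) / Δt)
          - deriv L ((x i (k + 1) - x i k) / Δt)) = 0 := by
      have := hsum
      rw [Finset.sum_sub_distrib, Finset.sum_add_distrib, hBsum] at this
      have h' : (∑ i ∈ Finset.Icc (1:ℤ) (N:ℤ),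
          (deriv L ((x i k - x i (k - 1)) / Δt)
            - deriv L ((x i (k + 1) - x i k) / Δt)) / Δt) = 0 := by linarith
      rw [← Finset.sum_div] at h'
      exact (div_eq_zero_iff.mp h').resolve_right (ne_of_gt hΔt)
    rw [Finset.sum_sub_distrib] at hzero
    linarith
  intro k hk
  induction k with
  | zero => rfl
  | succ n ih =>
    have h := key (n + 1) (by omega) (by omega)
    simp only [Nat.add_sub_cancel] at h
    rw [h]
    exact ih (by omega)
end
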